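/- For every factor x of the Thue-Morse word of length n ≥ 2, between any two consecutive occurrences (in position order) of words from {x, x̄}, there cannot be three consecutive occurrences all labeled the same (i.e., patterns AAA and BBB never occur in the intertwining sequence of x). -/

import Mathlib

open scoped Classical

/-- The Thue-Morse word: parity of the binary digit sum. -/
def tm (n : ℕ) : ℕ := (Nat.digits 2 n).sum % 2

/-- `t[j..j+n-1] = t[i..i+n-1]` : an occurrence at `j` of the factor `t[i..i+n-1]`. -/
def feq (i j n : ℕ) : Prop := ∀ k < n, tm (j + k) = tm (i + k)

/-- `t[j..j+n-1]` is the binary complement of `t[i..i+n-1]`. -/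
def feqc (i j n : ℕ) : Prop := ∀ k < n, tm (j + k) = 1 - tm (i + k)

/-- Positions of occurrences of `x = t[i..i+n-1]` or its complement. -/
def occSet (i n : ℕ) : ℕ → Prop := fun j => feq i j n ∨ feqc i j n

/-- The intertwining sequence of `x = t[i..i+n-1]`: at index `m`, the label of the
`m`-th (in increasing order of position) occurrence of `x` or its complement;
`0` codes `A` (an occurrence of `x`), `1` codes `B` (an occurrence of the complement). -/
noncomputable def itw (i n m : ℕ) : ℕ :=
  if feq i (Nat.nth (occSet i n) m) n then 0 else 1

/-- The intertwining sequence is `(AB)^ω`. -/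
def ABpat (i n : ℕ) : Prop := ∀ m, itw i n m = m % 2

/-- The intertwining sequence is `(BA)^ω`. -/
def BApat (i n : ℕ) : Prop := ∀ m, itw i n m = (m + 1) % 2

/-- The intertwining sequence is `(ABBA)^ω`. -/
def ABBApat (i n : ℕ) : Prop :=
  ∀ m, itw i n m = if m % 4 = 0 ∨ m % 4 = 3 then 0 else 1

/-- The intertwining sequence is `(BAAB)^ω`. -/
def BAABpat (i n : ℕ) : Prop :=
  ∀ m, itw i n m = if m % 4 = 0 ∨ m % 4 = 3 then 1 else 0

/-- The length-`n` factor of the Thue-Morse word starting at position `i`, as a word. -/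
def fac (i n : ℕ) : List ℕ := (List.range n).map (fun k => tm (i + k))


lemma tm_le (n : ℕ) : tm n ≤ 1 := by
  have : tm n < 2 := Nat.mod_lt _ (by norm_num)
  omega

lemma tm_zero : tm 0 = 0 := by simp [tm]

lemma tm_two_mul (n : ℕ) : tm (2 * n) = tm n := by
  rcases Nat.eq_zero_or_pos n with h | h
  · simp [h]
  · unfold tm
    rw [Nat.digits_def' (by norm_num : 1 < 2) (by omega)]
    simp [Nat.mul_div_cancel_left, Nat.mul_mod_right]

lemma tm_two_mul_add_one (n : ℕ) : tm (2 * n + 1) = 1 - tm n := by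
  unfold tm
  rw [Nat.digits_def' (by norm_num : 1 < 2) (by omega)]
  have h1 : (2 * n + 1) % 2 = 1 := by omega
  have h2 : (2 * n + 1) / 2 = n := by omega
  rw [h1, h2]
  simp only [List.sum_cons]
  omega

lemma tm_one : tm 1 = 1 := by
  have := tm_two_mul_add_one 0
  simpa [tm_zero] using this

lemma tm_succ_of_even {j : ℕ} (h : j % 2 = 0) : tm (j + 1) = 1 - tm j := by
  obtain ⟨k, rfl⟩ : ∃ k, j = 2 * k := ⟨j / 2, by omega⟩
  rw [tm_two_mul_add_one, tm_two_mul]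

lemma tm_adj_ne_of_even {j : ℕ} (h : j % 2 = 0) : tm j ≠ tm (j + 1) := by
  have h1 := tm_le j
  rw [tm_succ_of_even h]
  omega

lemma odd_of_adj_eq {j : ℕ} (h : tm j = tm (j + 1)) : j % 2 = 1 := by
  rcases Nat.mod_two_eq_zero_or_one j with h0 | h1
  · exact absurd h (tm_adj_ne_of_even h0)
  · exact h1

lemma tm_pred_of_odd {j : ℕ} (h : j % 2 = 1) : tm (j - 1) = 1 - tm j := by
  obtain ⟨k, rfl⟩ : ∃ k, j = 2 * k + 1 := ⟨j / 2, by omega⟩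
  have hk := tm_le k
  rw [show 2 * k + 1 - 1 = 2 * k from rfl, tm_two_mul, tm_two_mul_add_one]
  omega

lemma adj_odd_iff (k : ℕ) : tm (2 * k + 1) = tm (2 * k + 2) ↔ tm k ≠ tm (k + 1) := by
  have h1 := tm_le k
  have h2 := tm_le (k + 1)
  rw [tm_two_mul_add_one, show 2 * k + 2 = 2 * (k + 1) from rfl, tm_two_mul]
  omega

lemma no_aaa (j : ℕ) : ¬ (tm j = tm (j + 1) ∧ tm (j + 1) = tm (j + 2)) := by
  rintro ⟨h1, h2⟩
  have o1 := odd_of_adj_eq h1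
  have o2 := odd_of_adj_eq h2
  omega

lemma tm_pow_flip : ∀ K m, m < 2 ^ K → tm (m + 2 ^ K) = 1 - tm m := by
  intro K
  induction K with
  | zero =>
    intro m hm
    have : m = 0 := by simpa using hm
    subst this
    simp [tm_one, tm_zero]
  | succ K ih =>
    intro m hm
    rcases Nat.mod_two_eq_zero_or_one m with h | h
    · obtain ⟨m', rfl⟩ : ∃ m', m = 2 * m' := ⟨m / 2, by omega⟩
      have e : 2 * m' + 2 ^ (K + 1) = 2 * (m' + 2 ^ K) := by rw [pow_succ]; ring
      have hm' : m' < 2 ^ K := by rw [pow_succ] at hm; omega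
      rw [e, tm_two_mul, ih m' hm', tm_two_mul]
    · obtain ⟨m', rfl⟩ : ∃ m', m = 2 * m' + 1 := ⟨m / 2, by omega⟩
      have e : 2 * m' + 1 + 2 ^ (K + 1) = 2 * (m' + 2 ^ K) + 1 := by rw [pow_succ]; ring
      have hm' : m' < 2 ^ K := by rw [pow_succ] at hm; omega
      rw [e, tm_two_mul_add_one, ih m' hm', tm_two_mul_add_one]

/-- `Bad S` : there are three consecutive elements of `S` with equal `tm`-labels. -/
def Bad (S : ℕ → Prop) : Prop :=
  ∃ p q r, S p ∧ S q ∧ S r ∧ p < q ∧ q < r ∧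
    (∀ s, S s → p < s → s < r → s = q) ∧ tm p = tm q ∧ tm q = tm r

lemma occ_adj_eq {i n d j : ℕ} (hd : d + 1 < n) (heq : tm (i + d) = tm (i + d + 1))
    (hj : occSet i n j) : tm (j + d) = tm (j + d + 1) := by
  have e1 : j + (d + 1) = j + d + 1 := by omega
  have e2 : i + (d + 1) = i + d + 1 := by omega
  have li := tm_le (i + d)
  have li1 := tm_le (i + d + 1)
  rcases hj with h | h
  · have a1 := h d (by omega)
    have a2 := h (d + 1) hd
    rw [e1, e2] at a2
    omega
  · have a1 := h d (by omega)
    have a2 := h (d + 1) hd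
    rw [e1, e2] at a2
    omega

lemma occ_parity {i n d j : ℕ} (hd : d + 1 < n) (heq : tm (i + d) = tm (i + d + 1))
    (hj : occSet i n j) : j % 2 = i % 2 := by
  have h1 := odd_of_adj_eq (occ_adj_eq hd heq hj)
  have h2 := odd_of_adj_eq heq
  omega

lemma occ_shift {i n j : ℕ} (hn : 1 ≤ n) (hi : i % 2 = 1) (hj : j % 2 = 1) :
    occSet i n j ↔ occSet (i - 1) (n + 1) (j - 1) := by
  obtain ⟨a, rfl⟩ : ∃ a, i = 2 * a + 1 := ⟨i / 2, by omega⟩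
  obtain ⟨b, rfl⟩ : ∃ b, j = 2 * b + 1 := ⟨j / 2, by omega⟩
  have la := tm_le a
  have lb := tm_le b
  simp only [occSet, show 2 * a + 1 - 1 = 2 * a from rfl, show 2 * b + 1 - 1 = 2 * b from rfl]
  constructor
  · rintro (h | h)
    · left
      intro k hk
      rcases Nat.eq_zero_or_pos k with rfl | hkpos
      · have h0 := h 0 (by omega)
        simp only [Nat.add_zero] at h0 ⊢
        rw [tm_two_mul_add_one, tm_two_mul_add_one] at h0
        rw [tm_two_mul, tm_two_mul]
        omega
      · have h0 := h (k - 1) (by omega)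
        have e1 : 2 * b + 1 + (k - 1) = 2 * b + k := by omega
        have e2 : 2 * a + 1 + (k - 1) = 2 * a + k := by omega
        rw [e1, e2] at h0
        exact h0
    · right
      intro k hk
      rcases Nat.eq_zero_or_pos k with rfl | hkpos
      · have h0 := h 0 (by omega)
        simp only [Nat.add_zero] at h0 ⊢
        rw [tm_two_mul_add_one, tm_two_mul_add_one] at h0
        rw [tm_two_mul, tm_two_mul]
        omega
      · have h0 := h (k - 1) (by omega)
        have e1 : 2 * b + 1 + (k - 1) = 2 * b + k := by omega
        have e2 : 2 * a + 1 + (k - 1) = 2 * a + k := by omega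
        rw [e1, e2] at h0
        exact h0
  · rintro (h | h)
    · left
      intro k hk
      have h0 := h (k + 1) (by omega)
      have e1 : 2 * b + (k + 1) = 2 * b + 1 + k := by omega
      have e2 : 2 * a + (k + 1) = 2 * a + 1 + k := by omega
      rw [e1, e2] at h0
      exact h0
    · right
      intro k hk
      have h0 := h (k + 1) (by omega)
      have e1 : 2 * b + (k + 1) = 2 * b + 1 + k := by omega
      have e2 : 2 * a + (k + 1) = 2 * a + 1 + k := by omega
      rw [e1, e2] at h0
      exact h0

lemma occ_ext {i n j d : ℕ} (hi : i % 2 = 0) (hn : n % 2 = 1)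
    (hd : d + 1 < n) (heq : tm (i + d) = tm (i + d + 1)) :
    occSet i n j ↔ occSet i (n + 1) j := by
  constructor
  · intro h
    have hj : j % 2 = 0 := by
      have := occ_parity hd heq h
      omega
    have hn1 : 1 ≤ n := by omega
    have hjn : (j + n - 1) % 2 = 0 := by omega
    have hin : (i + n - 1) % 2 = 0 := by omega
    have t1 : tm (j + n - 1 + 1) = 1 - tm (j + n - 1) := tm_succ_of_even hjn
    have t2 : tm (i + n - 1 + 1) = 1 - tm (i + n - 1) := tm_succ_of_even hin
    rw [show j + n - 1 + 1 = j + n from by omega] at t1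
    rw [show i + n - 1 + 1 = i + n from by omega] at t2
    have lj := tm_le (j + n - 1)
    have li := tm_le (i + n - 1)
    rcases h with h | h
    · left
      intro k hk
      rcases Nat.lt_or_ge k n with hlt | hge
      · exact h k hlt
      · have hkn : k = n := by omega
        rw [hkn]
        have t3 := h (n - 1) (by omega)
        rw [show j + (n - 1) = j + n - 1 from by omega,
            show i + (n - 1) = i + n - 1 from by omega] at t3
        omega
    · right
      intro k hk
      rcases Nat.lt_or_ge k n with hlt | hge
      · exact h k hlt
      · have hkn : k = n := by omega
        rw [hkn]
        have t3 := h (n - 1) (by omega)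
        rw [show j + (n - 1) = j + n - 1 from by omega,
            show i + (n - 1) = i + n - 1 from by omega] at t3
        omega
  · rintro (h | h)
    · exact Or.inl fun k hk => h k (by omega)
    · exact Or.inr fun k hk => h k (by omega)

lemma occ_half {a b m : ℕ} : occSet (2 * a) (2 * m) (2 * b) ↔ occSet a m b := by
  constructor
  · rintro (h | h)
    · left
      intro k hk
      have h0 := h (2 * k) (by omega)
      rw [show 2 * b + 2 * k = 2 * (b + k) from by ring,
          show 2 * a + 2 * k = 2 * (a + k) from by ring, tm_two_mul, tm_two_mul] at h0
      exact h0
    · right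
      intro k hk
      have h0 := h (2 * k) (by omega)
      rw [show 2 * b + 2 * k = 2 * (b + k) from by ring,
          show 2 * a + 2 * k = 2 * (a + k) from by ring, tm_two_mul, tm_two_mul] at h0
      exact h0
  · rintro (h | h)
    · left
      intro k hk
      rcases Nat.mod_two_eq_zero_or_one k with hke | hko
      · obtain ⟨k', rfl⟩ : ∃ k', k = 2 * k' := ⟨k / 2, by omega⟩
        have h0 := h k' (by omega)
        rw [show 2 * b + 2 * k' = 2 * (b + k') from by ring,
            show 2 * a + 2 * k' = 2 * (a + k') from by ring, tm_two_mul, tm_two_mul]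
        exact h0
      · obtain ⟨k', rfl⟩ : ∃ k', k = 2 * k' + 1 := ⟨k / 2, by omega⟩
        have h0 := h k' (by omega)
        rw [show 2 * b + (2 * k' + 1) = 2 * (b + k') + 1 from by ring,
            show 2 * a + (2 * k' + 1) = 2 * (a + k') + 1 from by ring,
            tm_two_mul_add_one, tm_two_mul_add_one, h0]
    · right
      intro k hk
      rcases Nat.mod_two_eq_zero_or_one k with hke | hko
      · obtain ⟨k', rfl⟩ : ∃ k', k = 2 * k' := ⟨k / 2, by omega⟩
        have h0 := h k' (by omega)
        rw [show 2 * b + 2 * k' = 2 * (b + k') from by ring,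
            show 2 * a + 2 * k' = 2 * (a + k') from by ring, tm_two_mul, tm_two_mul]
        exact h0
      · obtain ⟨k', rfl⟩ : ∃ k', k = 2 * k' + 1 := ⟨k / 2, by omega⟩
        have h0 := h k' (by omega)
        have l1 := tm_le (a + k')
        rw [show 2 * b + (2 * k' + 1) = 2 * (b + k') + 1 from by ring,
            show 2 * a + (2 * k' + 1) = 2 * (a + k') + 1 from by ring,
            tm_two_mul_add_one, tm_two_mul_add_one]
        omega

lemma bad_shift {i n d : ℕ} (hi : i % 2 = 1) (hd : d + 1 < n)
    (heq : tm (i + d) = tm (i + d + 1)) :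
    Bad (occSet i n) → Bad (occSet (i - 1) (n + 1)) := by
  have hn : 1 ≤ n := by omega
  rintro ⟨p, q, r, hp, hq, hr, hpq, hqr, hbw, l1, l2⟩
  have hpp : p % 2 = 1 := by have := occ_parity hd heq hp; omega
  have hqp : q % 2 = 1 := by have := occ_parity hd heq hq; omega
  have hrp : r % 2 = 1 := by have := occ_parity hd heq hr; omega
  have heq' : tm (i - 1 + (d + 1)) = tm (i - 1 + (d + 1) + 1) := by
    rw [show i - 1 + (d + 1) = i + d from by omega, show i + d + 1 = i + d + 1 from rfl]
    exact heq
  have hd' : (d + 1) + 1 < n + 1 := by omega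
  refine ⟨p - 1, q - 1, r - 1, (occ_shift hn hi hpp).mp hp, (occ_shift hn hi hqp).mp hq,
    (occ_shift hn hi hrp).mp hr, by omega, by omega, ?_, ?_, ?_⟩
  · intro s hs hs1 hs2
    have hse : s % 2 = 0 := by
      have := occ_parity hd' heq' hs
      omega
    have hs' : occSet i n (s + 1) := by
      apply (occ_shift hn hi (by omega : (s + 1) % 2 = 1)).mpr
      simpa using hs
    have := hbw (s + 1) hs' (by omega) (by omega)
    omega
  · have a1 := tm_pred_of_odd hpp
    have a2 := tm_pred_of_odd hqp
    have b1 := tm_le p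
    have b2 := tm_le q
    omega
  · have a1 := tm_pred_of_odd hqp
    have a2 := tm_pred_of_odd hrp
    have b1 := tm_le q
    have b2 := tm_le r
    omega

lemma bad_half {a m d : ℕ} (hd : d + 1 < 2 * m) (heq : tm (2 * a + d) = tm (2 * a + d + 1)) :
    Bad (occSet (2 * a) (2 * m)) → Bad (occSet a m) := by
  rintro ⟨p, q, r, hp, hq, hr, hpq, hqr, hbw, l1, l2⟩
  have hpp : p % 2 = 0 := by have := occ_parity hd heq hp; omega
  have hqp : q % 2 = 0 := by have := occ_parity hd heq hq; omega
  have hrp : r % 2 = 0 := by have := occ_parity hd heq hr; omega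
  obtain ⟨p', rfl⟩ : ∃ p', p = 2 * p' := ⟨p / 2, by omega⟩
  obtain ⟨q', rfl⟩ : ∃ q', q = 2 * q' := ⟨q / 2, by omega⟩
  obtain ⟨r', rfl⟩ : ∃ r', r = 2 * r' := ⟨r / 2, by omega⟩
  refine ⟨p', q', r', occ_half.mp hp, occ_half.mp hq, occ_half.mp hr,
    by omega, by omega, ?_, ?_, ?_⟩
  · intro s hs hs1 hs2
    have := hbw (2 * s) (occ_half.mpr hs) (by omega) (by omega)
    omega
  · rw [tm_two_mul, tm_two_mul] at l1
    exact l1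
  · rw [tm_two_mul, tm_two_mul] at l2
    exact l2

lemma occ1 (i j : ℕ) : occSet i 1 j := by
  have li := tm_le i
  have lj := tm_le j
  by_cases h : tm j = tm i
  · left
    intro k hk
    have hk0 : k = 0 := by omega
    subst hk0
    simp only [Nat.add_zero]
    omega
  · right
    intro k hk
    have hk0 : k = 0 := by omega
    subst hk0
    simp only [Nat.add_zero]
    omega

lemma occ2_iff {i : ℕ} (halt : tm i ≠ tm (i + 1)) (j : ℕ) :
    occSet i 2 j ↔ tm j ≠ tm (j + 1) := by
  have li := tm_le i
  have li1 := tm_le (i + 1)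
  have lj := tm_le j
  have lj1 := tm_le (j + 1)
  constructor
  · rintro (h | h) <;>
    · have h0 := h 0 (by omega)
      have h1 := h 1 (by omega)
      simp only [Nat.add_zero] at h0
      omega
  · intro hne
    by_cases hc : tm j = tm i
    · left
      intro k hk
      have hk' : k = 0 ∨ k = 1 := by omega
      rcases hk' with rfl | rfl
      · simp only [Nat.add_zero]; omega
      · omega
    · right
      intro k hk
      have hk' : k = 0 ∨ k = 1 := by omega
      rcases hk' with rfl | rfl
      · simp only [Nat.add_zero]; omega
      · omega

lemma occ3_iff {i : ℕ} (h0 : tm i ≠ tm (i + 1)) (h1 : tm (i + 1) ≠ tm (i + 2)) (j : ℕ) :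
    occSet i 3 j ↔ (tm j ≠ tm (j + 1) ∧ tm (j + 1) ≠ tm (j + 2)) := by
  have li := tm_le i
  have li1 := tm_le (i + 1)
  have li2 := tm_le (i + 2)
  have lj := tm_le j
  have lj1 := tm_le (j + 1)
  have lj2 := tm_le (j + 2)
  constructor
  · rintro (h | h) <;>
    · have e0 := h 0 (by omega)
      have e1 := h 1 (by omega)
      have e2 := h 2 (by omega)
      simp only [Nat.add_zero] at e0
      exact ⟨by omega, by omega⟩
  · rintro ⟨a1, a2⟩
    by_cases hc : tm j = tm i
    · left
      intro k hk
      have hk' : k = 0 ∨ k = 1 ∨ k = 2 := by omega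
      rcases hk' with rfl | rfl | rfl
      · simp only [Nat.add_zero]; omega
      · omega
      · omega
    · right
      intro k hk
      have hk' : k = 0 ∨ k = 1 ∨ k = 2 := by omega
      rcases hk' with rfl | rfl | rfl
      · simp only [Nat.add_zero]; omega
      · omega
      · omega

lemma occ12_iff (j : ℕ) : occSet 1 2 j ↔ tm j = tm (j + 1) := by
  have c1 : tm 1 = 1 := tm_one
  have c2 : tm 2 = 1 := by rw [show (2 : ℕ) = 2 * 1 from rfl, tm_two_mul, tm_one]
  have lj := tm_le j
  have lj1 := tm_le (j + 1)
  constructor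
  · rintro (h | h) <;>
    · have h0 := h 0 (by omega)
      have h1 := h 1 (by omega)
      simp only [Nat.add_zero] at h0
      rw [show (1 : ℕ) + 1 = 2 from rfl] at h1
      omega
  · intro hee
    by_cases hc : tm j = 1
    · left
      intro k hk
      have hk' : k = 0 ∨ k = 1 := by omega
      rcases hk' with rfl | rfl
      · simp only [Nat.add_zero]; omega
      · rw [show (1 : ℕ) + 1 = 2 from rfl]; omega
    · right
      intro k hk
      have hk' : k = 0 ∨ k = 1 := by omega
      rcases hk' with rfl | rfl
      · simp only [Nat.add_zero]; omega
      · rw [show (1 : ℕ) + 1 = 2 from rfl]; omega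

lemma occ4_iff {i : ℕ} (h0 : tm i ≠ tm (i + 1)) (h1 : tm (i + 1) ≠ tm (i + 2))
    (h2 : tm (i + 2) ≠ tm (i + 3)) (j : ℕ) :
    occSet i 4 j ↔ (j % 2 = 0 ∧ tm (j / 2) = tm (j / 2 + 1)) := by
  have li := tm_le i
  have li1 := tm_le (i + 1)
  have li2 := tm_le (i + 2)
  have li3 := tm_le (i + 3)
  constructor
  · intro h
    have hd : tm j ≠ tm (j + 1) ∧ tm (j + 1) ≠ tm (j + 2) ∧ tm (j + 2) ≠ tm (j + 3) := by
      have lj := tm_le j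
      have lj1 := tm_le (j + 1)
      have lj2 := tm_le (j + 2)
      have lj3 := tm_le (j + 3)
      rcases h with h | h <;>
      · have e0 := h 0 (by omega)
        have e1 := h 1 (by omega)
        have e2 := h 2 (by omega)
        have e3 := h 3 (by omega)
        simp only [Nat.add_zero] at e0
        exact ⟨by omega, by omega, by omega⟩
    obtain ⟨a1, a2, a3⟩ := hd
    rcases Nat.mod_two_eq_zero_or_one j with hj | hj
    · obtain ⟨k, rfl⟩ : ∃ k, j = 2 * k := ⟨j / 2, by omega⟩
      refine ⟨by omega, ?_⟩
      rw [show 2 * k / 2 = k from by omega]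
      have lk := tm_le k
      have lk1 := tm_le (k + 1)
      by_contra hcc
      exact a2 ((adj_odd_iff k).mpr hcc)
    · obtain ⟨k, rfl⟩ : ∃ k, j = 2 * k + 1 := ⟨j / 2, by omega⟩
      exfalso
      have b1 : tm k = tm (k + 1) := by
        by_contra hcc
        have := (adj_odd_iff k).mpr hcc
        rw [show 2 * k + 1 + 1 = 2 * k + 2 from rfl] at a1
        exact a1 this
      have b2 : tm (k + 1) = tm (k + 2) := by
        by_contra hcc
        have hx := (adj_odd_iff (k + 1)).mpr hcc
        rw [show 2 * (k + 1) + 1 = 2 * k + 3 from by ring,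
            show 2 * (k + 1) + 2 = 2 * k + 4 from by ring] at hx
        rw [show 2 * k + 1 + 2 = 2 * k + 3 from by omega,
            show 2 * k + 1 + 3 = 2 * k + 4 from by omega] at a3
        exact a3 hx
      exact no_aaa k ⟨b1, b2⟩
  · rintro ⟨hj, hjj⟩
    obtain ⟨k, rfl⟩ : ∃ k, j = 2 * k := ⟨j / 2, by omega⟩
    rw [show 2 * k / 2 = k from by omega] at hjj
    have E0 : tm (2 * k) = tm k := tm_two_mul k
    have E1 : tm (2 * k + 1) = 1 - tm k := tm_two_mul_add_one k
    have E2 : tm (2 * k + 2) = tm (k + 1) := by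
      rw [show 2 * k + 2 = 2 * (k + 1) from by ring, tm_two_mul]
    have E3 : tm (2 * k + 3) = 1 - tm (k + 1) := by
      rw [show 2 * k + 3 = 2 * (k + 1) + 1 from by ring, tm_two_mul_add_one]
    have lk := tm_le k
    have lk1 := tm_le (k + 1)
    by_cases hc : tm (2 * k) = tm i
    · left
      intro kk hkk
      have hk' : kk = 0 ∨ kk = 1 ∨ kk = 2 ∨ kk = 3 := by omega
      rcases hk' with rfl | rfl | rfl | rfl
      · simp only [Nat.add_zero]; omega
      · omega
      · omega
      · omega
    · right
      intro kk hkk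
      have hk' : kk = 0 ∨ kk = 1 ∨ kk = 2 ∨ kk = 3 := by omega
      rcases hk' with rfl | rfl | rfl | rfl
      · simp only [Nat.add_zero]; omega
      · omega
      · omega
      · omega

lemma alt2 {i : ℕ} (halt : tm i ≠ tm (i + 1)) : ¬ Bad (occSet i 2) := by
  rintro ⟨p, q, r, hp, hq, hr, hpq, hqr, hbw, l1, l2⟩
  have hp' := (occ2_iff halt p).mp hp
  rcases Nat.mod_two_eq_zero_or_one p with hpe | hpo
  · by_cases hq1 : q = p + 1
    · subst hq1
      exact hp' l1
    · have hocc : occSet i 2 (p + 2) :=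
        (occ2_iff halt (p + 2)).mpr (tm_adj_ne_of_even (by omega))
      have hq2 : q = p + 2 := by
        by_contra hne
        have hge : p + 2 < q := by omega
        have := hbw (p + 2) hocc (by omega) (by omega)
        omega
      have hno : ¬ occSet i 2 (p + 1) := by
        intro hx
        have := hbw (p + 1) hx (by omega) (by omega)
        omega
      rw [occ2_iff halt (p + 1)] at hno
      push_neg at hno
      have hd := tm_adj_ne_of_even hpe
      rw [hq2] at l1
      rw [show p + 1 + 1 = p + 2 from rfl] at hno
      omega
  · have hocc : occSet i 2 (p + 1) :=
      (occ2_iff halt (p + 1)).mpr (tm_adj_ne_of_even (by omega))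
    have hq1 : q = p + 1 := by
      by_contra hne
      have := hbw (p + 1) hocc (by omega) (by omega)
      omega
    subst hq1
    exact hp' l1

lemma alt3 {i : ℕ} (h0 : tm i ≠ tm (i + 1)) (h1 : tm (i + 1) ≠ tm (i + 2)) :
    ¬ Bad (occSet i 3) := by
  rintro ⟨p, q, r, hp, hq, hr, hpq, hqr, hbw, l1, l2⟩
  have hp' := (occ3_iff h0 h1 p).mp hp
  have hq' := (occ3_iff h0 h1 q).mp hq
  rcases Nat.mod_two_eq_zero_or_one p with hpe | hpo
  · have hocc : occSet i 3 (p + 1) := by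
      apply (occ3_iff h0 h1 (p + 1)).mpr
      refine ⟨?_, ?_⟩
      · rw [show p + 1 + 1 = p + 2 from rfl]
        exact hp'.2
      · exact tm_adj_ne_of_even (by omega)
    have hq1 : q = p + 1 := by
      by_contra hne
      have := hbw (p + 1) hocc (by omega) (by omega)
      omega
    subst hq1
    exact hp'.1 l1
  · rcases Nat.mod_two_eq_zero_or_one q with hqe | hqo
    · have hocc : occSet i 3 (q + 1) := by
        apply (occ3_iff h0 h1 (q + 1)).mpr
        refine ⟨?_, ?_⟩
        · rw [show q + 1 + 1 = q + 2 from rfl]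
          exact hq'.2
        · exact tm_adj_ne_of_even (by omega)
      have hr1 : r = q + 1 := by
        by_contra hne
        have := hbw (q + 1) hocc (by omega) (by omega)
        omega
      subst hr1
      exact hq'.1 l2
    · obtain ⟨qq, rfl⟩ : ∃ qq, q = qq + 1 := ⟨q - 1, by omega⟩
      have hqq : qq % 2 = 0 := by omega
      have hocc : occSet i 3 qq := by
        apply (occ3_iff h0 h1 qq).mpr
        exact ⟨tm_adj_ne_of_even hqq, hq'.1⟩
      have := hbw qq hocc (by omega) (by omega)
      omega

theorem noBad : ∀ n, 1 ≤ n → ∀ i, ¬ Bad (occSet i n) := by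
  intro n
  induction n using Nat.strong_induction_on with
  | _ n IH =>
    intro hn i hB
    by_cases haa : ∃ d, d + 1 < n ∧ tm (i + d) = tm (i + d + 1)
    · obtain ⟨d, hd, heq⟩ := haa
      have hn2 : 2 ≤ n := by omega
      rcases Nat.mod_two_eq_zero_or_one i with hie | hio
      · rcases Nat.mod_two_eq_zero_or_one n with hne | hno
        · obtain ⟨a, rfl⟩ : ∃ a, i = 2 * a := ⟨i / 2, by omega⟩
          obtain ⟨mm, rfl⟩ : ∃ mm, n = 2 * mm := ⟨n / 2, by omega⟩
          exact IH mm (by omega) (by omega) a (bad_half hd heq hB)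
        · have hsq : occSet i n = occSet i (n + 1) := by
            funext j
            exact propext (occ_ext hie hno hd heq)
          rw [hsq] at hB
          obtain ⟨a, rfl⟩ : ∃ a, i = 2 * a := ⟨i / 2, by omega⟩
          obtain ⟨mm, hmm⟩ : ∃ mm, n + 1 = 2 * mm := ⟨(n + 1) / 2, by omega⟩
          rw [hmm] at hB
          have hd' : d + 1 < 2 * mm := by omega
          exact IH mm (by omega) (by omega) a (bad_half hd' heq hB)
      · have hB1 : Bad (occSet (i - 1) (n + 1)) := bad_shift hio hd heq hB
        have heq1 : tm ((i - 1) + (d + 1)) = tm ((i - 1) + (d + 1) + 1) := by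
          rw [show (i - 1) + (d + 1) = i + d from by omega]
          exact heq
        have hd1 : (d + 1) + 1 < n + 1 := by omega
        rcases Nat.mod_two_eq_zero_or_one n with hne | hno
        · have hsq : occSet (i - 1) (n + 1) = occSet (i - 1) (n + 2) := by
            funext j
            exact propext (occ_ext (by omega) (by omega) hd1 heq1)
          rw [hsq] at hB1
          obtain ⟨a, ha⟩ : ∃ a, i - 1 = 2 * a := ⟨(i - 1) / 2, by omega⟩
          obtain ⟨mm, hmm⟩ : ∃ mm, n + 2 = 2 * mm := ⟨(n + 2) / 2, by omega⟩
          rw [ha, hmm] at hB1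
          have heq2 : tm (2 * a + (d + 1)) = tm (2 * a + (d + 1) + 1) := by
            rw [← ha]
            exact heq1
          have hd2 : (d + 1) + 1 < 2 * mm := by omega
          have hB2 : Bad (occSet a mm) := bad_half hd2 heq2 hB1
          by_cases hnn : n = 2
          · have hmm2 : mm = 2 := by omega
            subst hmm2
            have hd0 : d = 0 := by omega
            subst hd0
            have heq0 : tm i = tm (i + 1) := by simpa using heq
            have e1 : tm a = 1 - tm i := by
              have hx := tm_pred_of_odd hio
              rw [ha] at hx
              rw [tm_two_mul] at hx
              exact hx
            have e2 : tm (a + 1) = tm i := by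
              have hy : 2 * a + 2 = i + 1 := by omega
              have h2 : tm (2 * (a + 1)) = tm (a + 1) := tm_two_mul (a + 1)
              rw [show 2 * (a + 1) = 2 * a + 2 from by ring, hy] at h2
              omega
            have halt : tm a ≠ tm (a + 1) := by
              have := tm_le i
              omega
            exact alt2 halt hB2
          · exact IH mm (by omega) (by omega) a hB2
        · obtain ⟨a, ha⟩ : ∃ a, i - 1 = 2 * a := ⟨(i - 1) / 2, by omega⟩
          obtain ⟨mm, hmm⟩ : ∃ mm, n + 1 = 2 * mm := ⟨(n + 1) / 2, by omega⟩
          rw [ha, hmm] at hB1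
          have heq2 : tm (2 * a + (d + 1)) = tm (2 * a + (d + 1) + 1) := by
            rw [← ha]
            exact heq1
          have hd2 : (d + 1) + 1 < 2 * mm := by omega
          exact IH mm (by omega) (by omega) a (bad_half hd2 heq2 hB1)
    · push_neg at haa
      rcases (by omega : n = 1 ∨ n = 2 ∨ n = 3 ∨ 4 ≤ n) with h1 | h2 | h3 | h4
      · subst h1
        obtain ⟨p, q, r, hp, hq, hr, hpq, hqr, hbw, l1, l2⟩ := hB
        by_cases hr2 : p + 2 < r
        · have q1 := hbw (p + 1) (occ1 i (p + 1)) (by omega) (by omega)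
          have q2 := hbw (p + 2) (occ1 i (p + 2)) (by omega) hr2
          omega
        · have e1 : q = p + 1 := by omega
          have e2 : r = p + 2 := by omega
          subst e1
          subst e2
          exact no_aaa p ⟨l1, l2⟩
      · subst h2
        have a0 : tm i ≠ tm (i + 1) := by simpa using haa 0 (by omega)
        exact alt2 a0 hB
      · subst h3
        have a0 : tm i ≠ tm (i + 1) := by simpa using haa 0 (by omega)
        have a1 : tm (i + 1) ≠ tm (i + 2) := by
          have hx := haa 1 (by omega)
          rw [show i + 1 + 1 = i + 2 from rfl] at hx
          exact hx
        exact alt3 a0 a1 hB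
      · rcases Nat.mod_two_eq_zero_or_one i with hie | hio
        · by_cases hn5 : 5 ≤ n
          · obtain ⟨k, rfl⟩ : ∃ k, i = 2 * k := ⟨i / 2, by omega⟩
            have b1 : tm k = tm (k + 1) := by
              have h3 := haa 1 (by omega)
              rw [show 2 * k + 1 + 1 = 2 * k + 2 from rfl] at h3
              by_contra hcc
              exact h3 ((adj_odd_iff k).mpr hcc)
            have b2 : tm (k + 1) = tm (k + 2) := by
              have h3 := haa 3 (by omega)
              by_contra hcc
              have hx := (adj_odd_iff (k + 1)).mpr hcc
              rw [show 2 * (k + 1) + 1 = 2 * k + 3 from by ring] at hx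
              rw [show 2 * (k + 1) + 2 = 2 * k + 3 + 1 from by omega] at hx
              exact h3 hx
            exact no_aaa k ⟨b1, b2⟩
          · have hn4 : n = 4 := by omega
            subst hn4
            have a0 : tm i ≠ tm (i + 1) := by simpa using haa 0 (by omega)
            have a1 : tm (i + 1) ≠ tm (i + 2) := by
              have hx := haa 1 (by omega)
              rw [show i + 1 + 1 = i + 2 from rfl] at hx
              exact hx
            have a2 : tm (i + 2) ≠ tm (i + 3) := by
              have hx := haa 2 (by omega)
              rw [show i + 2 + 1 = i + 3 from rfl] at hx
              exact hx
            obtain ⟨p, q, r, hp, hq, hr, hpq, hqr, hbw, l1, l2⟩ := hB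
            have hp' := (occ4_iff a0 a1 a2 p).mp hp
            have hq' := (occ4_iff a0 a1 a2 q).mp hq
            have hr' := (occ4_iff a0 a1 a2 r).mp hr
            obtain ⟨p', rfl⟩ : ∃ p', p = 2 * p' := ⟨p / 2, by have := hp'.1; omega⟩
            obtain ⟨q', rfl⟩ : ∃ q', q = 2 * q' := ⟨q / 2, by have := hq'.1; omega⟩
            obtain ⟨r', rfl⟩ : ∃ r', r = 2 * r' := ⟨r / 2, by have := hr'.1; omega⟩
            apply IH 2 (by omega) (by omega) 1
            have hp2 : tm p' = tm (p' + 1) := by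
              have := hp'.2
              rw [show 2 * p' / 2 = p' from by omega] at this
              exact this
            have hq2 : tm q' = tm (q' + 1) := by
              have := hq'.2
              rw [show 2 * q' / 2 = q' from by omega] at this
              exact this
            have hr2 : tm r' = tm (r' + 1) := by
              have := hr'.2
              rw [show 2 * r' / 2 = r' from by omega] at this
              exact this
            refine ⟨p', q', r', (occ12_iff p').mpr hp2, (occ12_iff q').mpr hq2,
              (occ12_iff r').mpr hr2, by omega, by omega, ?_, ?_, ?_⟩
            · intro s hs hs1 hs2
              have hs4 : occSet i 4 (2 * s) := by
                apply (occ4_iff a0 a1 a2 (2 * s)).mpr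
                refine ⟨by omega, ?_⟩
                rw [show 2 * s / 2 = s from by omega]
                exact (occ12_iff s).mp hs
              have := hbw (2 * s) hs4 (by omega) (by omega)
              omega
            · rw [tm_two_mul, tm_two_mul] at l1
              exact l1
            · rw [tm_two_mul, tm_two_mul] at l2
              exact l2
        · obtain ⟨k, rfl⟩ : ∃ k, i = 2 * k + 1 := ⟨i / 2, by omega⟩
          have b1 : tm k = tm (k + 1) := by
            have h3 := haa 0 (by omega)
            simp only [Nat.add_zero] at h3
            rw [show 2 * k + 1 + 1 = 2 * k + 2 from rfl] at h3
            by_contra hcc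
            exact h3 ((adj_odd_iff k).mpr hcc)
          have b2 : tm (k + 1) = tm (k + 2) := by
            have h3 := haa 2 (by omega)
            by_contra hcc
            have hx := (adj_odd_iff (k + 1)).mpr hcc
            rw [show 2 * (k + 1) + 1 = 2 * k + 1 + 2 from by ring] at hx
            rw [show 2 * (k + 1) + 2 = 2 * k + 1 + 2 + 1 from by omega] at hx
            exact h3 hx
          exact no_aaa k ⟨b1, b2⟩

lemma occ_infinite (i n : ℕ) : {j | occSet i n j}.Infinite := by
  have key : ∀ K, i + n ≤ 2 ^ K → occSet i n (i + 2 ^ K) := by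
    intro K hK
    right
    intro k hk
    have e : i + 2 ^ K + k = (i + k) + 2 ^ K := by omega
    rw [e, tm_pow_flip K (i + k) (by omega)]
  obtain ⟨c, hc⟩ : ∃ c, i + n ≤ 2 ^ c := ⟨i + n, le_of_lt (Nat.lt_two_pow_self (n := i + n))⟩
  refine Set.infinite_of_injective_forall_mem (f := fun K : ℕ => i + 2 ^ (K + c)) ?_ ?_
  · intro x y hxy
    simp only at hxy
    have : (2 : ℕ) ^ (x + c) = 2 ^ (y + c) := by omega
    have := Nat.pow_right_injective (le_refl 2) this
    omega
  · intro K
    exact key (K + c) (le_trans hc (Nat.pow_le_pow_right (by norm_num) (by omega)))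


/-- The intertwining sequence of any factor of length at least 2 never contains
three consecutive equal labels (no AAA and no BBB). -/
theorem tm_no_triple_label (i n : ℕ) (hn : 2 ≤ n) (m : ℕ) :
    ¬ (itw i n m = itw i n (m + 1) ∧ itw i n (m + 1) = itw i n (m + 2)) := by
  rintro ⟨h1, h2⟩
  have hInf : (setOf (occSet i n)).Infinite := occ_infinite i n
  have mem : ∀ k, occSet i n (Nat.nth (occSet i n) k) :=
    Nat.nth_mem_of_infinite hInf
  have lt : ∀ {a b : ℕ}, a < b → Nat.nth (occSet i n) a < Nat.nth (occSet i n) b :=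
    fun h => (Nat.nth_lt_nth hInf).mpr h
  have lab : ∀ a b : ℕ, itw i n a = itw i n b →
      tm (Nat.nth (occSet i n) a) = tm (Nat.nth (occSet i n) b) := by
    intro a b h
    unfold itw at h
    have li := tm_le i
    by_cases ha : feq i (Nat.nth (occSet i n) a) n <;>
      by_cases hb : feq i (Nat.nth (occSet i n) b) n
    · have e1 := ha 0 (by omega)
      have e2 := hb 0 (by omega)
      simp only [Nat.add_zero] at e1 e2
      omega
    · simp [ha, hb] at h
    · simp [ha, hb] at h
    · have ha' : feqc i (Nat.nth (occSet i n) a) n := (mem a).resolve_left ha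
      have hb' : feqc i (Nat.nth (occSet i n) b) n := (mem b).resolve_left hb
      have e1 := ha' 0 (by omega)
      have e2 := hb' 0 (by omega)
      simp only [Nat.add_zero] at e1 e2
      omega
  apply noBad n (by omega) i
  refine ⟨Nat.nth (occSet i n) m, Nat.nth (occSet i n) (m + 1), Nat.nth (occSet i n) (m + 2),
    mem m, mem (m + 1), mem (m + 2), lt (by omega), lt (by omega), ?_,
    lab m (m + 1) h1, lab (m + 1) (m + 2) h2⟩
  intro s hs hs1 hs2
  have hcnt : Nat.nth (occSet i n) (Nat.count (occSet i n) s) = s := Nat.nth_count hs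
  have c1 : m < Nat.count (occSet i n) s := by
    by_contra hle
    push_neg at hle
    have := Nat.nth_monotone hInf hle
    rw [hcnt] at this
    omega
  have c2 : Nat.count (occSet i n) s < m + 2 := by
    by_contra hle
    push_neg at hle
    have := Nat.nth_monotone hInf hle
    rw [hcnt] at this
    omega
  have : Nat.count (occSet i n) s = m + 1 := by omega
  rw [← hcnt, this]
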